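/- arXiv:math/0404225 — 2 statements merged into one kernel-verified Lean document; each statement's English description precedes it below -/
import Mathlib

section
/- Let M be a 12-vertex 6-dimensional weak pseudomanifold with complementarity such that every facet meets every other facet in exactly 3, 4, 5, or 6 vertices with multiplicities 36, 58, 30, 7 respectively. Then every edge (2-element face) of M is contained in exactly 42 facets, and every vertex is contained in exactly 77 facets. -/
open Finset

/-- `K` is an (abstract) simplicial complex: faces are nonempty finite sets,
closed under passing to nonempty subsets. -/
def IsComplex {V : Type} [DecidableEq V] (K : Finset (Finset V)) : Prop :=
  (∀ σ ∈ K, σ.Nonempty) ∧ ∀ σ ∈ K, ∀ τ ⊆ σ, τ.Nonempty → τ ∈ K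

/-- `K` is pure of dimension `d`: every face has at most `d+1` vertices and is
contained in a face with exactly `d+1` vertices (a facet). -/
def IsPure {V : Type} [DecidableEq V] (d : ℕ) (K : Finset (Finset V)) : Prop :=
  (∀ σ ∈ K, σ.card ≤ d + 1) ∧ ∀ σ ∈ K, ∃ γ ∈ K, σ ⊆ γ ∧ γ.card = d + 1

/-- `K` is a `d`-dimensional weak pseudomanifold: a pure `d`-dimensional simplicial
complex (with at least one facet) in which every `(d-1)`-face (i.e. `d`-element face)
is contained in exactly two facets. -/
def IsWPM {V : Type} [DecidableEq V] (d : ℕ) (K : Finset (Finset V)) : Prop :=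
  IsComplex K ∧ IsPure d K ∧ (∃ σ ∈ K, σ.card = d + 1) ∧
    ∀ σ ∈ K, σ.card = d → (K.filter fun γ => γ.card = d + 1 ∧ σ ⊆ γ).card = 2

/-- Complementarity: exactly one of each complementary pair of nonempty subsets
of the vertex set is a face. -/
def Complementarity {V : Type} [DecidableEq V] [Fintype V] (K : Finset (Finset V)) : Prop :=
  ∀ A : Finset V, A.Nonempty → Aᶜ.Nonempty → (A ∈ K ↔ Aᶜ ∉ K)

/-- The link of `σ` in `K`: all faces `τ` disjoint from `σ` with `σ ∪ τ` a face. -/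
def lk {V : Type} [DecidableEq V] (K : Finset (Finset V)) (σ : Finset V) :
    Finset (Finset V) :=
  K.filter fun τ => σ ∩ τ = ∅ ∧ σ ∪ τ ∈ K

/-- The vertex set of a simplicial complex. -/
def vertSet {V : Type} [DecidableEq V] [Fintype V] (K : Finset (Finset V)) : Finset V :=
  Finset.univ.filter fun v => ({v} : Finset V) ∈ K

namespace Stmt17

/-- The set of facets (7-element faces). -/
def Fct (M : Finset (Finset (Fin 12))) : Finset (Finset (Fin 12)) :=
  M.filter fun γ => γ.card = 7

/-- All 2-element subsets of the 12 vertices. -/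
def E12 : Finset (Finset (Fin 12)) := (univ : Finset (Fin 12)).powersetCard 2

lemma mem_E12 {e : Finset (Fin 12)} : e ∈ E12 ↔ e.card = 2 := by
  simp [E12, Finset.mem_powersetCard_univ]

lemma inter_card {M : Finset (Finset (Fin 12))} (hM : IsWPM 6 M) (hcomp : Complementarity M)
    {γ δ : Finset (Fin 12)} (hγ : γ ∈ Fct M) (hδ : δ ∈ Fct M) (hne : γ ≠ δ) :
    (γ ∩ δ).card ∈ ({3,4,5,6} : Finset ℕ) := by
  rw [Fct, mem_filter] at hγ hδ
  obtain ⟨hγM, hγ7⟩ := hγ; obtain ⟨hδM, hδ7⟩ := hδ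
  have hu : (γ ∪ δ).card + (γ ∩ δ).card = 14 := by
    rw [Finset.card_union_add_card_inter, hγ7, hδ7]
  have hle : (γ ∪ δ).card ≤ 12 := le_trans (Finset.card_le_univ _) (by simp)
  have h7 : (γ ∩ δ).card ≤ 7 :=
    le_trans (Finset.card_le_card Finset.inter_subset_left) (le_of_eq hγ7)
  have hne7 : (γ ∩ δ).card ≠ 7 := by
    intro h
    have h1 : γ ∩ δ = γ := Finset.eq_of_subset_of_card_le Finset.inter_subset_left (by omega)
    have hsub : γ ⊆ δ := by rw [← h1]; exact Finset.inter_subset_right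
    exact hne (Finset.eq_of_subset_of_card_le hsub (by omega))
  have hne2 : (γ ∩ δ).card ≠ 2 := by
    intro h
    have huniv : γ ∪ δ = univ := (Finset.card_eq_iff_eq_univ _).mp (by simp; omega)
    have hsub : γᶜ ⊆ δ := by
      intro x hx
      rw [Finset.mem_compl] at hx
      have hx2 : x ∈ γ ∪ δ := huniv ▸ Finset.mem_univ x
      exact (Finset.mem_union.mp hx2).resolve_left hx
    have hcne : (γᶜ).Nonempty := by
      rw [← Finset.card_pos, Finset.card_compl]
      simp [hγ7]
    have hcm : γᶜ ∈ M := hM.1.2 δ hδM γᶜ hsub hcne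
    exact ((hcomp γ (by rw [← Finset.card_pos, hγ7]; norm_num) hcne).mp hγM) hcm
  simp only [mem_insert, mem_singleton]
  omega

lemma sum_others {M : Finset (Finset (Fin 12))}
    (hinter : ∀ γ δ, γ ∈ Fct M → δ ∈ Fct M → γ ≠ δ → (γ ∩ δ).card ∈ ({3,4,5,6} : Finset ℕ))
    (hmeet : ∀ α ∈ M, α.card = 7 →
      (M.filter fun β => β.card = 7 ∧ (α ∩ β).card = 3).card = 36 ∧
      (M.filter fun β => β.card = 7 ∧ (α ∩ β).card = 4).card = 58 ∧
      (M.filter fun β => β.card = 7 ∧ (α ∩ β).card = 5).card = 30 ∧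
      (M.filter fun β => β.card = 7 ∧ (α ∩ β).card = 6).card = 7)
    (g : ℕ → ℕ) (γ : Finset (Fin 12)) (hγ : γ ∈ Fct M) :
    ∑ δ ∈ (Fct M).erase γ, g ((γ ∩ δ).card) = 36 * g 3 + 58 * g 4 + 30 * g 5 + 7 * g 6 := by
  obtain ⟨hγM, hγ7⟩ := Finset.mem_filter.mp hγ
  have hmaps : ∀ δ ∈ (Fct M).erase γ, (γ ∩ δ).card ∈ ({3,4,5,6} : Finset ℕ) := fun δ hδ =>
    hinter γ δ hγ (Finset.mem_of_mem_erase hδ) (fun h => (Finset.ne_of_mem_erase hδ) h.symm)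
  rw [← Finset.sum_fiberwise_of_maps_to hmaps (fun δ => g ((γ ∩ δ).card))]
  have hfib : ∀ k, k ≠ 7 → ((Fct M).erase γ).filter (fun δ => (γ ∩ δ).card = k)
      = M.filter (fun β => β.card = 7 ∧ (γ ∩ β).card = k) := by
    intro k hk
    rw [Finset.filter_erase, Fct, Finset.filter_filter, Finset.erase_eq_of_notMem]
    simp only [mem_filter, Finset.inter_self, hγ7, not_and]
    omega
  have hval : ∀ k (c : ℕ), (((Fct M).erase γ).filter (fun δ => (γ ∩ δ).card = k)).card = c →
      ∑ δ ∈ ((Fct M).erase γ).filter (fun δ => (γ ∩ δ).card = k), g ((γ ∩ δ).card) = c * g k := by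
    intro k c hc
    rw [Finset.sum_congr rfl (fun δ hδ => by rw [(Finset.mem_filter.mp hδ).2]),
      Finset.sum_const, hc, smul_eq_mul]
  obtain ⟨h3, h4, h5, h6⟩ := hmeet γ hγM hγ7
  rw [show ({3,4,5,6} : Finset ℕ) = insert 3 (insert 4 (insert 5 {6})) from rfl,
    Finset.sum_insert (by decide), Finset.sum_insert (by decide), Finset.sum_insert (by decide),
    Finset.sum_singleton,
    hval 3 36 (by rw [hfib 3 (by norm_num)]; exact h3),
    hval 4 58 (by rw [hfib 4 (by norm_num)]; exact h4),
    hval 5 30 (by rw [hfib 5 (by norm_num)]; exact h5),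
    hval 6 7 (by rw [hfib 6 (by norm_num)]; exact h6)]
  ring

lemma card_F {M : Finset (Finset (Fin 12))}
    (hfacet : ∃ σ ∈ M, σ.card = 7)
    (hsum : ∀ (g : ℕ → ℕ) (γ : Finset (Fin 12)), γ ∈ Fct M →
      ∑ δ ∈ (Fct M).erase γ, g ((γ ∩ δ).card) = 36 * g 3 + 58 * g 4 + 30 * g 5 + 7 * g 6) :
    (Fct M).card = 132 := by
  obtain ⟨α, hαM, hα7⟩ := hfacet
  have hα : α ∈ Fct M := Finset.mem_filter.mpr ⟨hαM, hα7⟩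
  have h := hsum (fun _ => 1) α hα
  simp only [Finset.sum_const, smul_eq_mul, mul_one] at h
  have := Finset.card_erase_of_mem hα
  have hpos : 0 < (Fct M).card := Finset.card_pos.mpr ⟨α, hα⟩
  omega

lemma filter_sub (s : Finset (Fin 12)) :
    E12.filter (fun e => e ⊆ s) = s.powersetCard 2 := by
  ext e
  simp only [Finset.mem_filter, mem_E12, Finset.mem_powersetCard]
  tauto

lemma sum1 {M : Finset (Finset (Fin 12))} (hcardF : (Fct M).card = 132) :
    ∑ e ∈ E12, ((Fct M).filter fun γ => e ⊆ γ).card = 2772 := by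
  calc ∑ e ∈ E12, ((Fct M).filter fun γ => e ⊆ γ).card
      = ∑ e ∈ E12, ∑ γ ∈ Fct M, if e ⊆ γ then 1 else 0 :=
        Finset.sum_congr rfl (fun e _ => Finset.card_filter _ _)
    _ = ∑ γ ∈ Fct M, ∑ e ∈ E12, if e ⊆ γ then 1 else 0 := Finset.sum_comm
    _ = ∑ γ ∈ Fct M, 21 := Finset.sum_congr rfl (fun γ hγ => by
        rw [← Finset.card_filter, filter_sub, Finset.card_powersetCard,
          (Finset.mem_filter.mp hγ).2]; decide)
    _ = 2772 := by rw [Finset.sum_const, hcardF]; decide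

lemma sum2 {M : Finset (Finset (Fin 12))} (hcardF : (Fct M).card = 132)
    (hsum : ∀ (g : ℕ → ℕ) (γ : Finset (Fin 12)), γ ∈ Fct M →
      ∑ δ ∈ (Fct M).erase γ, g ((γ ∩ δ).card) = 36 * g 3 + 58 * g 4 + 30 * g 5 + 7 * g 6) :
    ∑ e ∈ E12, (((Fct M).filter fun γ => e ⊆ γ).card)^2 = 116424 := by
  have hterm : ∀ (p q : Prop) (_ : Decidable p) (_ : Decidable q),
      (if p then (1:ℕ) else 0) * (if q then 1 else 0) = if p ∧ q then 1 else 0 := by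
    intro p q _ _; split_ifs <;> simp_all
  calc ∑ e ∈ E12, (((Fct M).filter fun γ => e ⊆ γ).card)^2
      = ∑ e ∈ E12, ∑ γ ∈ Fct M, ∑ δ ∈ Fct M, if e ⊆ γ ∧ e ⊆ δ then 1 else 0 := by
        refine Finset.sum_congr rfl fun e _ => ?_
        rw [sq, Finset.card_filter, Finset.sum_mul_sum]
        exact Finset.sum_congr rfl fun γ _ => Finset.sum_congr rfl fun δ _ => hterm _ _ _ _
    _ = ∑ γ ∈ Fct M, ∑ δ ∈ Fct M, ∑ e ∈ E12, if e ⊆ γ ∧ e ⊆ δ then 1 else 0 := by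
        rw [Finset.sum_comm]
        exact Finset.sum_congr rfl fun γ _ => Finset.sum_comm
    _ = ∑ γ ∈ Fct M, ∑ δ ∈ Fct M, Nat.choose ((γ ∩ δ).card) 2 := by
        refine Finset.sum_congr rfl fun γ _ => Finset.sum_congr rfl fun δ _ => ?_
        rw [← Finset.card_filter]
        have : E12.filter (fun e => e ⊆ γ ∧ e ⊆ δ) = E12.filter (fun e => e ⊆ γ ∩ δ) := by
          apply Finset.filter_congr; intro e _; simp [Finset.subset_inter_iff]
        rw [this, filter_sub, Finset.card_powersetCard]
    _ = ∑ γ ∈ Fct M, 882 := by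
        refine Finset.sum_congr rfl fun γ hγ => ?_
        rw [← Finset.sum_erase_add _ _ hγ, hsum (fun k => Nat.choose k 2) γ hγ,
          Finset.inter_self, (Finset.mem_filter.mp hγ).2]; decide
    _ = 116424 := by rw [Finset.sum_const, hcardF]; decide

lemma variance (n : Finset (Fin 12) → ℕ)
    (h1 : ∑ e ∈ E12, n e = 2772) (h2 : ∑ e ∈ E12, (n e)^2 = 116424) :
    ∀ e ∈ E12, n e = 42 := by
  have hcard : E12.card = 66 := by
    rw [E12, Finset.card_powersetCard]; simp; decide
  have h1' : ∑ e ∈ E12, (n e : ℤ) = 2772 := by exact_mod_cast h1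
  have h2' : ∑ e ∈ E12, ((n e : ℤ))^2 = 116424 := by exact_mod_cast h2
  have hzero : ∑ e ∈ E12, ((n e : ℤ) - 42)^2 = 0 := by
    calc ∑ e ∈ E12, ((n e : ℤ) - 42)^2
        = ∑ e ∈ E12, (((n e : ℤ))^2 - 84 * (n e : ℤ) + 1764) :=
          Finset.sum_congr rfl fun e _ => by ring
      _ = (∑ e ∈ E12, ((n e : ℤ))^2) - 84 * (∑ e ∈ E12, (n e : ℤ)) + (E12.card : ℤ) * 1764 := by
          rw [Finset.sum_add_distrib, Finset.sum_sub_distrib, Finset.mul_sum, Finset.sum_const,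
            nsmul_eq_mul]
      _ = 0 := by rw [h1', h2', hcard]; norm_num
  intro e he
  have hz := (Finset.sum_eq_zero_iff_of_nonneg (fun i _ => sq_nonneg _)).mp hzero e he
  have h0 : (n e : ℤ) - 42 = 0 := pow_eq_zero_iff (two_ne_zero) |>.mp hz
  have : (n e : ℤ) = 42 := by linarith
  exact_mod_cast this

lemma edges_through (v : Fin 12) (s : Finset (Fin 12)) (hv : v ∈ s) :
    (E12.filter fun e => v ∈ e ∧ e ⊆ s).card = s.card - 1 := by
  have himg : E12.filter (fun e => v ∈ e ∧ e ⊆ s)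
      = (s.erase v).image (fun w => ({v, w} : Finset (Fin 12))) := by
    ext e
    simp only [Finset.mem_filter, mem_E12, Finset.mem_image, Finset.mem_erase]
    constructor
    · rintro ⟨h2, hve, hes⟩
      have h1 : (e.erase v).card = 1 := by rw [Finset.card_erase_of_mem hve, h2]
      obtain ⟨w, hw⟩ := Finset.card_eq_one.mp h1
      have hwv : w ≠ v := by
        have : w ∈ e.erase v := hw ▸ Finset.mem_singleton_self w
        exact (Finset.mem_erase.mp this).1
      have hwe : w ∈ e := by
        have : w ∈ e.erase v := hw ▸ Finset.mem_singleton_self w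
        exact Finset.mem_of_mem_erase this
      refine ⟨w, ⟨hwv, hes hwe⟩, ?_⟩
      rw [show ({v, w} : Finset (Fin 12)) = insert v {w} from rfl, ← hw,
        Finset.insert_erase hve]
    · rintro ⟨w, ⟨hwv, hws⟩, rfl⟩
      refine ⟨?_, Finset.mem_insert_self _ _, ?_⟩
      · rw [Finset.card_insert_of_notMem (by simp [Ne.symm hwv]), Finset.card_singleton]
      · intro x hx
        rcases Finset.mem_insert.mp hx with rfl | hx
        · exact hv
        · rw [Finset.mem_singleton.mp hx]; exact hws
  rw [himg, Finset.card_image_of_injOn, Finset.card_erase_of_mem hv]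
  intro a ha b hb hab
  have haev : a ≠ v := (Finset.mem_erase.mp ha).1
  have : a ∈ ({v, b} : Finset (Fin 12)) := by
    simp only at hab
    rw [← hab]; simp
  rcases Finset.mem_insert.mp this with h | h
  · exact absurd h haev
  · exact Finset.mem_singleton.mp h

end Stmt17

/-- Lemma 4.12: let `M` be a 12-vertex 6-dimensional weak
pseudomanifold with complementarity such that every facet meets exactly 36, 58, 30
and 7 other facets in exactly 3, 4, 5 and 6 vertices respectively. Then every edge
of `M` lies in exactly 42 facets and every vertex lies in exactly 77 facets. -/
theorem stmt_17 (M : Finset (Finset (Fin 12))) (hM : IsWPM 6 M)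
    (hvert : ∀ v : Fin 12, ({v} : Finset (Fin 12)) ∈ M)
    (hcomp : Complementarity M)
    (hmeet : ∀ α ∈ M, α.card = 7 →
      (M.filter fun β => β.card = 7 ∧ (α ∩ β).card = 3).card = 36 ∧
      (M.filter fun β => β.card = 7 ∧ (α ∩ β).card = 4).card = 58 ∧
      (M.filter fun β => β.card = 7 ∧ (α ∩ β).card = 5).card = 30 ∧
      (M.filter fun β => β.card = 7 ∧ (α ∩ β).card = 6).card = 7) :
    (∀ e ∈ M, e.card = 2 → (M.filter fun γ => γ.card = 7 ∧ e ⊆ γ).card = 42) ∧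
    (∀ v : Fin 12, (M.filter fun γ => γ.card = 7 ∧ v ∈ γ).card = 77) := by
  classical
  have hinter : ∀ γ δ, γ ∈ Stmt17.Fct M → δ ∈ Stmt17.Fct M → γ ≠ δ →
      (γ ∩ δ).card ∈ ({3,4,5,6} : Finset ℕ) :=
    fun γ δ hγ hδ hne => Stmt17.inter_card hM hcomp hγ hδ hne
  have hsum := Stmt17.sum_others hinter hmeet
  have hcardF := Stmt17.card_F hM.2.2.1 hsum
  have key := Stmt17.variance (fun e => ((Stmt17.Fct M).filter fun γ => e ⊆ γ).card)
    (Stmt17.sum1 hcardF) (Stmt17.sum2 hcardF hsum)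
  constructor
  · intro e heM he2
    have hfe : (Stmt17.Fct M).filter (fun γ => e ⊆ γ)
        = M.filter (fun γ => γ.card = 7 ∧ e ⊆ γ) := by
      rw [Stmt17.Fct, Finset.filter_filter]
    rw [← hfe]
    exact key e (Stmt17.mem_E12.mpr he2)
  · intro v
    have hL : ∀ γ ∈ Stmt17.Fct M,
        (∑ e ∈ Stmt17.E12, if v ∈ e ∧ e ⊆ γ then (1:ℕ) else 0) = if v ∈ γ then 6 else 0 := by
      intro γ hγ
      rw [← Finset.card_filter]
      by_cases hv : v ∈ γ
      · rw [if_pos hv, Stmt17.edges_through v γ hv, (Finset.mem_filter.mp hγ).2]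
      · rw [if_neg hv, Finset.card_eq_zero]
        apply Finset.filter_false_of_mem
        exact fun e he h => hv (h.2 h.1)
    have hR : ∀ e ∈ Stmt17.E12,
        (∑ γ ∈ Stmt17.Fct M, if v ∈ e ∧ e ⊆ γ then (1:ℕ) else 0)
          = if v ∈ e then ((Stmt17.Fct M).filter fun γ => e ⊆ γ).card else 0 := by
      intro e he
      by_cases hv : v ∈ e
      · simp only [hv, true_and, if_pos]
        exact (Finset.card_filter _ _).symm
      · simp [hv]
    have hswap : ∑ γ ∈ Stmt17.Fct M, ∑ e ∈ Stmt17.E12, (if v ∈ e ∧ e ⊆ γ then (1:ℕ) else 0)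
        = ∑ e ∈ Stmt17.E12, ∑ γ ∈ Stmt17.Fct M, (if v ∈ e ∧ e ⊆ γ then (1:ℕ) else 0) :=
      Finset.sum_comm
    rw [Finset.sum_congr rfl hL, Finset.sum_congr rfl hR, ← Finset.sum_filter,
      ← Finset.sum_filter, Finset.sum_const, smul_eq_mul] at hswap
    have hE : (Stmt17.E12.filter fun e => v ∈ e).card = 11 := by
      have h1 : Stmt17.E12.filter (fun e => v ∈ e)
          = Stmt17.E12.filter (fun e => v ∈ e ∧ e ⊆ univ) := by
        apply Finset.filter_congr; intro e _; simp
      rw [h1, Stmt17.edges_through v univ (Finset.mem_univ v), Finset.card_univ]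
      rfl
    have h462 : ∑ e ∈ Stmt17.E12.filter (fun e => v ∈ e),
        ((Stmt17.Fct M).filter fun γ => e ⊆ γ).card = 462 := by
      rw [Finset.sum_congr rfl (fun e he => key e (Finset.mem_of_mem_filter e he)),
        Finset.sum_const, hE]
      rfl
    rw [h462] at hswap
    have hfv : (Stmt17.Fct M).filter (fun γ => v ∈ γ)
        = M.filter (fun γ => γ.card = 7 ∧ v ∈ γ) := by
      rw [Stmt17.Fct, Finset.filter_filter]
    rw [← hfv]
    omega
end

section
/- Let L be the link of an edge in a 12-vertex 6-dimensional weak pseudomanifold with complementarity (given each edge is in 42 facets and each vertex in 77 facets). Then L is a 10-vertex 2-neighbourly 4-dimensional weak pseudomanifold with f-vector (10, 45, 100, 105, 42) and Euler characteristic 2. -/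
open Finset

/-- Euler characteristic of a simplicial complex. -/
def eulerChar {V : Type} [DecidableEq V] (K : Finset (Finset V)) : ℤ :=
  ∑ σ ∈ K, (-1 : ℤ) ^ (σ.card - 1)

/-- A simplicial complex is connected if any two of its vertices are joined by a
path of edges. -/
def ComplexConnected {V : Type} [DecidableEq V] [Fintype V] (L : Finset (Finset V)) : Prop :=
  ∀ u ∈ vertSet L, ∀ v ∈ vertSet L,
    Relation.ReflTransGen (fun a b : V => ({a, b} : Finset V) ∈ L) u v

/-- `L` is a circle (cycle complex): a connected 1-dimensional simplicial complex in
which every vertex lies in exactly two edges. -/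
def IsCycle {V : Type} [DecidableEq V] [Fintype V] (L : Finset (Finset V)) : Prop :=
  IsComplex L ∧ (∀ σ ∈ L, σ.card ≤ 2) ∧ (∃ σ ∈ L, σ.card = 2) ∧
    (∀ v ∈ vertSet L, (L.filter fun e => e.card = 2 ∧ v ∈ e).card = 2) ∧
    ComplexConnected L

/-- `L` is a closed combinatorial 2-manifold: a 2-dimensional simplicial complex in
which the link of every vertex is a circle. -/
def IsClosed2Mfd {V : Type} [DecidableEq V] [Fintype V] (L : Finset (Finset V)) : Prop :=
  IsComplex L ∧ (∀ σ ∈ L, σ.card ≤ 3) ∧ (∃ σ ∈ L, σ.card = 3) ∧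
    ∀ v ∈ vertSet L, IsCycle (lk L {v})

/-- `L` is a combinatorial 2-sphere: a connected closed combinatorial 2-manifold of
Euler characteristic 2. -/
def Is2Sphere {V : Type} [DecidableEq V] [Fintype V] (L : Finset (Finset V)) : Prop :=
  IsClosed2Mfd L ∧ ComplexConnected L ∧ eulerChar L = 2

/-- The degree of a face: the number of vertices of its link. -/
def degFace {V : Type} [DecidableEq V] [Fintype V] (K : Finset (Finset V))
    (σ : Finset V) : ℕ :=
  (vertSet (lk K σ)).card

/-!
The link of an edge `e` of a 6-dimensional weak pseudomanifold is a 4-dimensional weak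
pseudomanifold whose facets are the 42 facets of `M` through `e`; counting ridge–facet incidences
gives `f₃ = 5 · 42 / 2`. With 12 vertices, complementarity forces every set of at most 4 vertices
to be a face, so the link is 2-neighbourly on the 10 vertices off `e`. A 3-set `τ` off `e` fails
to lie in the link exactly when the complement of `e ∪ τ` is a facet missing `e`; there are
`132 - 2 · 77 + 42 = 20` such facets (`132 = 12 · 77 / 7` facets in all), so `f₂ = 120 - 20`.
-/

section Link

variable {V : Type} [DecidableEq V] {K : Finset (Finset V)} {σ τ : Finset V}

lemma mem_lk : τ ∈ lk K σ ↔ τ ∈ K ∧ Disjoint σ τ ∧ σ ∪ τ ∈ K := by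
  simp [lk, disjoint_iff_inter_eq_empty]

lemma IsComplex.mem_lk_iff (hK : IsComplex K) (hτ : τ.Nonempty) :
    τ ∈ lk K σ ↔ Disjoint σ τ ∧ σ ∪ τ ∈ K := by
  rw [mem_lk]
  exact ⟨fun h => h.2, fun h => ⟨hK.2 _ h.2 τ subset_union_right hτ, h⟩⟩

lemma IsComplex.sdiff_mem_lk (hK : IsComplex K) {γ : Finset V} (hγ : γ ∈ K) (hσγ : σ ⊆ γ)
    (hne : (γ \ σ).Nonempty) : γ \ σ ∈ lk K σ :=
  (hK.mem_lk_iff hne).mpr ⟨disjoint_sdiff, by rwa [union_sdiff_of_subset hσγ]⟩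

lemma IsComplex.card_filter_lk (hK : IsComplex K) {ρ : Finset V} (hρ : Disjoint σ ρ) {k : ℕ}
    (hk : 0 < k) :
    #{τ ∈ lk K σ | τ.card = k ∧ ρ ⊆ τ} = #{γ ∈ K | γ.card = σ.card + k ∧ σ ∪ ρ ⊆ γ} := by
  refine card_nbij' (σ ∪ ·) (· \ σ) ?_ ?_ ?_ ?_
  · intro τ hτ
    simp only [coe_filter, Set.mem_ofPred_eq, mem_lk] at hτ ⊢
    obtain ⟨⟨-, hστ, hστK⟩, rfl, hρτ⟩ := hτ
    exact ⟨hστK, card_union_of_disjoint hστ, union_subset_union_right hρτ⟩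
  · intro γ hγ
    simp only [coe_filter, Set.mem_ofPred_eq] at hγ ⊢
    obtain ⟨hγK, hcard, hσργ⟩ := hγ
    have hσγ : σ ⊆ γ := subset_union_left.trans hσργ
    have hcard' : (γ \ σ).card = k := by rw [card_sdiff_of_subset hσγ]; omega
    exact ⟨hK.sdiff_mem_lk hγK hσγ (card_pos.mp (by omega)), hcard',
      subset_sdiff.mpr ⟨subset_union_right.trans hσργ, hρ.symm⟩⟩
  · intro τ hτ
    simp only [coe_filter, Set.mem_ofPred_eq, mem_lk] at hτ
    exact union_sdiff_cancel_left hτ.1.2.1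
  · intro γ hγ
    simp only [coe_filter, Set.mem_ofPred_eq] at hγ
    exact union_sdiff_of_subset (subset_union_left.trans hγ.2.2)

lemma IsComplex.filter_lk_card_eq_powersetCard [Fintype V] (hK : IsComplex K) {k : ℕ} (hk : 0 < k)
    (hfull : ∀ A : Finset V, A.card = σ.card + k → A ∈ K) :
    {τ ∈ lk K σ | τ.card = k} = σᶜ.powersetCard k := by
  ext τ
  simp only [mem_filter, mem_powersetCard, subset_compl_iff_disjoint_left]
  refine ⟨fun h => ⟨(mem_lk.mp h.1).2.1, h.2⟩, fun ⟨hστ, hτk⟩ => ⟨?_, hτk⟩⟩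
  exact (hK.mem_lk_iff (card_pos.mp (by omega))).mpr
    ⟨hστ, hfull _ (by rw [card_union_of_disjoint hστ, hτk])⟩

lemma IsComplex.isComplex_lk (hK : IsComplex K) : IsComplex (lk K σ) := by
  refine ⟨fun τ hτ => hK.1 τ (mem_lk.mp hτ).1, fun ρ hρ τ hτρ hτ => ?_⟩
  obtain ⟨-, hσρ, hσρK⟩ := mem_lk.mp hρ
  exact (hK.mem_lk_iff hτ).mpr ⟨hσρ.mono_right hτρ,
    hK.2 _ hσρK _ (union_subset_union_right hτρ) (hτ.mono subset_union_right)⟩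

theorem IsWPM.isWPM_lk {d n : ℕ} (hK : IsWPM d K) (hσ : σ ∈ K) (hd : σ.card + n = d) :
    IsWPM n (lk K σ) := by
  obtain ⟨hcx, ⟨hle, hfacet⟩, -, hridge⟩ := hK
  have hsdiff : ∀ γ ∈ K, σ ⊆ γ → γ.card = d + 1 → γ \ σ ∈ lk K σ ∧ (γ \ σ).card = n + 1 :=
    fun γ hγ hσγ hcard => by
      have hcard' : (γ \ σ).card = n + 1 := by rw [card_sdiff_of_subset hσγ]; omega
      exact ⟨hcx.sdiff_mem_lk hγ hσγ (card_pos.mp (by omega)), hcard'⟩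
  refine ⟨hcx.isComplex_lk, ⟨fun τ hτ => ?_, fun τ hτ => ?_⟩, ?_, fun ρ hρ hρn => ?_⟩
  · obtain ⟨-, hστ, hστK⟩ := mem_lk.mp hτ
    have := hle _ hστK
    rw [card_union_of_disjoint hστ] at this
    omega
  · obtain ⟨-, hστ, hστK⟩ := mem_lk.mp hτ
    obtain ⟨γ, hγ, hστγ, hcard⟩ := hfacet _ hστK
    refine ⟨γ \ σ, (hsdiff γ hγ (subset_union_left.trans hστγ) hcard).1,
      subset_sdiff.mpr ⟨subset_union_right.trans hστγ, hστ.symm⟩,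
      (hsdiff γ hγ (subset_union_left.trans hστγ) hcard).2⟩
  · obtain ⟨γ, hγ, hσγ, hcard⟩ := hfacet σ hσ
    exact ⟨γ \ σ, hsdiff γ hγ hσγ hcard⟩
  · obtain ⟨-, hσρ, hσρK⟩ := mem_lk.mp hρ
    rw [hcx.card_filter_lk hσρ n.succ_pos, show σ.card + (n + 1) = d + 1 by omega]
    exact hridge _ hσρK (by rw [card_union_of_disjoint hσρ]; omega)

/-- Each ridge lies in two facets and each facet has `d + 1` ridges. -/
theorem IsWPM.two_mul_card_ridges {d : ℕ} (hK : IsWPM d K) (hd : 0 < d) :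
    2 * #{ρ ∈ K | ρ.card = d} = (d + 1) * #{γ ∈ K | γ.card = d + 1} := by
  rw [mul_comm, mul_comm (d + 1)]
  refine card_mul_eq_card_mul (· ⊆ ·) (fun ρ hρ => ?_) (fun γ hγ => ?_)
  · rw [mem_filter] at hρ
    rw [bipartiteAbove, filter_filter, ← hK.2.2.2 ρ hρ.1 hρ.2]
  · rw [mem_filter] at hγ
    have : {ρ ∈ {ρ ∈ K | ρ.card = d} | ρ ⊆ γ} = γ.powersetCard d := by
      ext ρ
      simp only [mem_filter, mem_powersetCard]
      refine ⟨fun h => ⟨h.2, h.1.2⟩, fun h => ⟨⟨hK.1.2 γ hγ.1 ρ h.1 ?_, h.2⟩, h.1⟩⟩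
      exact card_pos.mp (by omega)
    rw [bipartiteBelow, this, card_powersetCard, hγ.2, Nat.choose_succ_self_right]

end Link

section Counting

variable {V : Type} [DecidableEq V]

lemma card_mul_card_eq_of_forall_card_filter_mem [Fintype V] {F : Finset (Finset V)} {m r : ℕ}
    (hm : ∀ γ ∈ F, γ.card = m) (hr : ∀ v, #{γ ∈ F | v ∈ γ} = r) :
    m * #F = Fintype.card V * r := by
  rw [← sum_card hr, sum_congr rfl hm, sum_const, smul_eq_mul, mul_comm]

lemma card_filter_disjoint_pair_add (F : Finset (Finset V)) (u v : V) :
    #{γ ∈ F | Disjoint {u, v} γ} + (#{γ ∈ F | u ∈ γ} + #{γ ∈ F | v ∈ γ}) =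
      #F + #{γ ∈ F | {u, v} ⊆ γ} := by
  have hpair : {γ ∈ F | {u, v} ⊆ γ} = {γ ∈ F | u ∈ γ} ∩ {γ ∈ F | v ∈ γ} := by
    rw [← filter_and]; simp [insert_subset_iff]
  have hdisj : {γ ∈ F | Disjoint {u, v} γ} = {γ ∈ F | ¬(u ∈ γ ∨ v ∈ γ)} := by
    simp [disjoint_insert_left]
  rw [hpair, hdisj, ← card_union_add_card_inter, ← filter_or, ← add_assoc,
    add_comm #{γ ∈ F | ¬_}, card_filter_add_card_filter_not]

lemma eulerChar_eq_sum_Icc {K : Finset (Finset V)} {n : ℕ} (hne : ∀ σ ∈ K, σ.Nonempty)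
    (hle : ∀ σ ∈ K, σ.card ≤ n) :
    eulerChar K = ∑ k ∈ Icc 1 n, (-1 : ℤ) ^ (k - 1) * #{σ ∈ K | σ.card = k} := by
  have hmaps : ∀ σ ∈ K, σ.card ∈ Icc 1 n :=
    fun σ hσ => mem_Icc.mpr ⟨card_pos.mpr (hne σ hσ), hle σ hσ⟩
  rw [eulerChar, ← sum_fiberwise_of_maps_to hmaps]
  refine sum_congr rfl fun k _ => ?_
  rw [sum_congr rfl fun σ hσ => by rw [(mem_filter.mp hσ).2], sum_const, nsmul_eq_mul, mul_comm]

end Counting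

namespace Complementarity

variable {V : Type} [DecidableEq V] [Fintype V] {K : Finset (Finset V)} {A σ : Finset V}

lemma notMem_iff_compl_mem (hcomp : Complementarity K) (hA : A.Nonempty) (hAc : Aᶜ.Nonempty) :
    A ∉ K ↔ Aᶜ ∈ K := by
  rw [hcomp A hA hAc, not_not]

lemma mem_of_card_lt {d : ℕ} (hcomp : Complementarity K) (hle : ∀ γ ∈ K, γ.card ≤ d + 1)
    (hA : A.Nonempty) (hAd : A.card + d + 1 < Fintype.card V) : A ∈ K := by
  have hAc : Aᶜ.card = Fintype.card V - A.card := card_compl A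
  refine (hcomp A hA (card_pos.mp (by omega))).mpr fun hAcK => ?_
  have := hle _ hAcK
  omega

/-- A `k`-subset `τ` of `σᶜ` either spans a face `σ ∪ τ`, i.e. lies in the link, or the complement
`(σ ∪ τ)ᶜ = σᶜ \ τ` is a face missing `σ`. -/
lemma card_filter_lk_add (hcomp : Complementarity K) (hK : IsComplex K) (hσ : σ.Nonempty)
    {k : ℕ} (hk : 0 < k) (hkN : σ.card + k < Fintype.card V) :
    #{τ ∈ lk K σ | τ.card = k} +
        #{γ ∈ K | γ.card = Fintype.card V - σ.card - k ∧ Disjoint σ γ} =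
      (Fintype.card V - σ.card).choose k := by
  set T := σᶜ.powersetCard k
  have hσc : σᶜ.card = Fintype.card V - σ.card := card_compl σ
  have hcompl : ∀ τ, (σ ∪ τ)ᶜ = σᶜ \ τ := fun τ => by rw [compl_union, sdiff_eq_inter_compl]
  have hin : {τ ∈ lk K σ | τ.card = k} = {τ ∈ T | σ ∪ τ ∈ K} := by
    ext τ
    simp only [T, mem_filter, mem_powersetCard, subset_compl_iff_disjoint_left]
    constructor
    · rintro ⟨hτ, rfl⟩
      exact ⟨⟨(mem_lk.mp hτ).2.1, rfl⟩, (mem_lk.mp hτ).2.2⟩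
    · rintro ⟨⟨hστ, rfl⟩, hστK⟩
      exact ⟨(hK.mem_lk_iff (card_pos.mp hk)).mpr ⟨hστ, hστK⟩, rfl⟩
  have hout : #{τ ∈ T | σ ∪ τ ∉ K} =
      #{γ ∈ K | γ.card = Fintype.card V - σ.card - k ∧ Disjoint σ γ} := by
    refine card_nbij' (σᶜ \ ·) (σᶜ \ ·) (fun τ hτ => ?_) (fun γ hγ => ?_)
      (fun τ hτ => ?_) (fun γ hγ => ?_)
    · simp only [T, coe_filter, mem_powersetCard, Set.mem_ofPred_eq] at hτ ⊢
      obtain ⟨⟨hτσ, rfl⟩, hστK⟩ := hτ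
      have hcard : (σᶜ \ τ).card = Fintype.card V - σ.card - τ.card := by
        rw [card_sdiff_of_subset hτσ, hσc]
      rw [← hcompl τ]
      refine ⟨(hcomp.notMem_iff_compl_mem (hσ.mono subset_union_left) ?_).mp hστK, ?_, ?_⟩
      · rw [hcompl τ, ← card_pos, hcard]; omega
      · rw [hcompl τ, hcard]
      · exact disjoint_compl_right.mono_left subset_union_left
    · simp only [T, coe_filter, mem_powersetCard, Set.mem_ofPred_eq] at hγ ⊢
      obtain ⟨hγK, hcard, hσγ⟩ := hγ
      have hγσ : γ ⊆ σᶜ := subset_compl_iff_disjoint_left.mpr hσγ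
      have hback : (σ ∪ σᶜ \ γ)ᶜ = γ := by rw [hcompl, Finset.sdiff_sdiff_eq_self hγσ]
      refine ⟨⟨sdiff_subset, ?_⟩, fun hK' => ?_⟩
      · rw [card_sdiff_of_subset hγσ, hσc, hcard]; omega
      · refine (hcomp.notMem_iff_compl_mem (hσ.mono subset_union_left) ?_).mpr ?_ hK' <;>
          rw [hback]
        · exact card_pos.mp (by omega)
        · exact hγK
    · simp only [T, coe_filter, mem_powersetCard, Set.mem_ofPred_eq] at hτ
      exact Finset.sdiff_sdiff_eq_self hτ.1.1
    · simp only [coe_filter, Set.mem_ofPred_eq] at hγ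
      exact Finset.sdiff_sdiff_eq_self (subset_compl_iff_disjoint_left.mpr hγ.2.2)
  rw [hin, ← hout, card_filter_add_card_filter_not, card_powersetCard, hσc]

end Complementarity

section EdgeLink

variable {M : Finset (Finset (Fin 12))} {e : Finset (Fin 12)}

lemma lk_filter_card_eq_powersetCard_of_le_two (hM : IsWPM 6 M) (hcomp : Complementarity M)
    (hecard : e.card = 2) {k : ℕ} (hk : 0 < k) (hk2 : k ≤ 2) :
    {τ ∈ lk M e | τ.card = k} = eᶜ.powersetCard k :=
  hM.1.filter_lk_card_eq_powersetCard hk fun A hA =>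
    hcomp.mem_of_card_lt hM.2.1.1 (card_pos.mp (by omega)) (by simp only [Fintype.card_fin]; omega)

lemma card_lk_filter_card_three (hM : IsWPM 6 M) (hcomp : Complementarity M)
    (hedge : ∀ e ∈ M, e.card = 2 → #{γ ∈ M | γ.card = 7 ∧ e ⊆ γ} = 42)
    (hvx : ∀ v : Fin 12, #{γ ∈ M | γ.card = 7 ∧ v ∈ γ} = 77) (he : e ∈ M) (hecard : e.card = 2) :
    #{τ ∈ lk M e | τ.card = 3} = 100 := by
  have hfacets : 7 * #{γ ∈ M | γ.card = 7} = Fintype.card (Fin 12) * 77 :=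
    card_mul_card_eq_of_forall_card_filter_mem (fun γ hγ => (mem_filter.mp hγ).2)
      fun v => by rw [filter_filter]; exact hvx v
  have hsplit := hcomp.card_filter_lk_add hM.1 (σ := e) (card_pos.mp (by omega)) (k := 3)
    three_pos (by simp only [Fintype.card_fin, hecard]; omega)
  simp only [Fintype.card_fin, hecard, Nat.reduceSub] at hfacets hsplit
  rw [show Nat.choose 10 3 = 120 from rfl] at hsplit
  obtain ⟨u, v, -, rfl⟩ := card_eq_two.mp hecard
  have hincl := card_filter_disjoint_pair_add {γ ∈ M | γ.card = 7} u v
  simp only [filter_filter, hvx, hedge _ he hecard] at hincl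
  omega

end EdgeLink

theorem stmt_18_general (M : Finset (Finset (Fin 12))) (hM : IsWPM 6 M)
    (hcomp : Complementarity M)
    (hedge : ∀ e ∈ M, e.card = 2 → (M.filter fun γ => γ.card = 7 ∧ e ⊆ γ).card = 42)
    (hvx : ∀ v : Fin 12, (M.filter fun γ => γ.card = 7 ∧ v ∈ γ).card = 77)
    (e : Finset (Fin 12)) (he : e ∈ M) (hecard : e.card = 2) :
    IsWPM 4 (lk M e) ∧
    (vertSet (lk M e)).card = 10 ∧
    (∀ u ∈ vertSet (lk M e), ∀ v ∈ vertSet (lk M e), u ≠ v →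
      ({u, v} : Finset (Fin 12)) ∈ lk M e) ∧
    ((lk M e).filter fun s => s.card = 1).card = 10 ∧
    ((lk M e).filter fun s => s.card = 2).card = 45 ∧
    ((lk M e).filter fun s => s.card = 3).card = 100 ∧
    ((lk M e).filter fun s => s.card = 4).card = 105 ∧
    ((lk M e).filter fun s => s.card = 5).card = 42 ∧
    eulerChar (lk M e) = 2 := by
  have hL : IsWPM 4 (lk M e) := hM.isWPM_lk he (by omega)
  have hlk1 := lk_filter_card_eq_powersetCard_of_le_two hM hcomp hecard one_pos one_le_two
  have hlk2 := lk_filter_card_eq_powersetCard_of_le_two hM hcomp hecard two_pos le_rfl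
  have hV : vertSet (lk M e) = eᶜ := by
    ext v
    simpa [vertSet] using congrArg ({v} ∈ ·) hlk1
  have hf2 := card_lk_filter_card_three hM hcomp hedge hvx he hecard
  have hf4 : #{τ ∈ lk M e | τ.card = 5} = 42 := by
    simpa [hecard, hedge e he hecard] using hM.1.card_filter_lk (disjoint_empty_right e) (k := 5)
  have hf3 : #{τ ∈ lk M e | τ.card = 4} = 105 := by
    have := hL.two_mul_card_ridges (by norm_num)
    simp only [Nat.reduceAdd, hf4] at this
    omega
  have hf0 : #{τ ∈ lk M e | τ.card = 1} = 10 := by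
    rw [hlk1, card_powersetCard, card_compl, hecard]; rfl
  have hf1 : #{τ ∈ lk M e | τ.card = 2} = 45 := by
    rw [hlk2, card_powersetCard, card_compl, hecard]; rfl
  refine ⟨hL, by simp [hV, card_compl, hecard], fun u hu v hv huv => ?_,
    hf0, hf1, hf2, hf3, hf4, ?_⟩
  · rw [hV] at hu hv
    have hpair : {u, v} ∈ {τ ∈ lk M e | τ.card = 2} := by
      rw [hlk2, mem_powersetCard]
      exact ⟨insert_subset hu (singleton_subset_iff.mpr hv), card_pair huv⟩
    exact (mem_filter.mp hpair).1
  · rw [eulerChar_eq_sum_Icc hL.1.1 hL.2.1.1]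
    simp [sum_Icc_succ_top, hf0, hf1, hf2, hf3, hf4]

/-- Lemma 4.13, combinatorial part: in a 12-vertex 6-dimensional weak
pseudomanifold `M` with complementarity, in which every edge lies in exactly 42
facets and every vertex in exactly 77 facets, the link `L` of any edge is a
10-vertex 2-neighbourly 4-dimensional weak pseudomanifold with f-vector
`(10, 45, 100, 105, 42)` and Euler characteristic 2. -/
theorem stmt_18 (M : Finset (Finset (Fin 12))) (hM : IsWPM 6 M)
    (hvert : ∀ v : Fin 12, ({v} : Finset (Fin 12)) ∈ M)
    (hcomp : Complementarity M)
    (hedge : ∀ e ∈ M, e.card = 2 → (M.filter fun γ => γ.card = 7 ∧ e ⊆ γ).card = 42)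
    (hvx : ∀ v : Fin 12, (M.filter fun γ => γ.card = 7 ∧ v ∈ γ).card = 77)
    (e : Finset (Fin 12)) (he : e ∈ M) (hecard : e.card = 2) :
    IsWPM 4 (lk M e) ∧
    (vertSet (lk M e)).card = 10 ∧
    (∀ u ∈ vertSet (lk M e), ∀ v ∈ vertSet (lk M e), u ≠ v →
      ({u, v} : Finset (Fin 12)) ∈ lk M e) ∧
    ((lk M e).filter fun s => s.card = 1).card = 10 ∧
    ((lk M e).filter fun s => s.card = 2).card = 45 ∧
    ((lk M e).filter fun s => s.card = 3).card = 100 ∧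
    ((lk M e).filter fun s => s.card = 4).card = 105 ∧
    ((lk M e).filter fun s => s.card = 5).card = 42 ∧
    eulerChar (lk M e) = 2 :=
  stmt_18_general M hM hcomp hedge hvx e he hecard
end
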